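/- If M is a p×q real matrix and L is a q×r matrix of full column rank with L Lᵀ = Mᵀ M, then M† = L (Lᵀ L)⁻¹ (Lᵀ L)⁻¹ Lᵀ Mᵀ. -/
import Mathlib


open Matrix

def IsMPInv {p q : ℕ} (M : Matrix (Fin p) (Fin q) ℝ) (B : Matrix (Fin q) (Fin p) ℝ) : Prop :=
  M * B * M = M ∧ B * M * B = B ∧ (M * B)ᵀ = M * B ∧ (B * M)ᵀ = B * M

lemma isUnit_of_rank_eq {n : ℕ} (A : Matrix (Fin n) (Fin n) ℝ) (h : A.rank = n) : IsUnit A := by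
  rw [← Matrix.mulVec_surjective_iff_isUnit]
  have hrange : LinearMap.range A.mulVecLin = ⊤ := by
    apply Submodule.eq_top_of_finrank_eq
    rw [← Matrix.rank, h, Module.finrank_fintype_fun_eq_card, Fintype.card_fin]
  exact LinearMap.range_eq_top.mp hrange

lemma mp_unique {p q : ℕ} {M : Matrix (Fin p) (Fin q) ℝ} {B1 B2 : Matrix (Fin q) (Fin p) ℝ}
    (h1 : IsMPInv M B1) (h2 : IsMPInv M B2) : B1 = B2 := by
  obtain ⟨a1, b1, c1, d1⟩ := h1
  obtain ⟨a2, b2, c2, d2⟩ := h2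
  have hMB : M * B1 = M * B2 := by
    calc M * B1 = (M * B1)ᵀ := c1.symm
    _ = B1ᵀ * Mᵀ := by rw [transpose_mul]
    _ = B1ᵀ * (M * B2 * M)ᵀ := by rw [a2]
    _ = B1ᵀ * (Mᵀ * (M * B2)ᵀ) := by rw [transpose_mul]
    _ = (B1ᵀ * Mᵀ) * (M * B2) := by rw [c2, Matrix.mul_assoc]
    _ = (M * B1)ᵀ * (M * B2) := by rw [transpose_mul]
    _ = (M * B1 * M) * B2 := by rw [c1]; simp only [Matrix.mul_assoc]
    _ = M * B2 := by rw [a1]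
  have hBM : B2 * M = B1 * M := by
    calc B2 * M = (B2 * M)ᵀ := d2.symm
    _ = Mᵀ * B2ᵀ := by rw [transpose_mul]
    _ = (M * B1 * M)ᵀ * B2ᵀ := by rw [a1]
    _ = ((B1 * M)ᵀ * Mᵀ) * B2ᵀ := by rw [show M * B1 * M = M * (B1 * M) by rw [Matrix.mul_assoc],
          transpose_mul]
    _ = (B1 * M) * (Mᵀ * B2ᵀ) := by rw [d1, Matrix.mul_assoc]
    _ = (B1 * M) * (B2 * M)ᵀ := by rw [transpose_mul]
    _ = B1 * (M * B2 * M) := by rw [d2, Matrix.mul_assoc, Matrix.mul_assoc]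
    _ = B1 * M := by rw [a2]
  calc B1 = B1 * M * B1 := b1.symm
  _ = B1 * (M * B1) := by rw [Matrix.mul_assoc]
  _ = B1 * (M * B2) := by rw [hMB]
  _ = (B1 * M) * B2 := by rw [Matrix.mul_assoc]
  _ = B2 * M * B2 := by rw [hBM]
  _ = B2 := b2

/-- If L is a full-column-rank factor of MᵀM, then M† = L(LᵀL)⁻¹(LᵀL)⁻¹LᵀMᵀ. -/
theorem stmt3 {p q r : ℕ} (M : Matrix (Fin p) (Fin q) ℝ)
    (L : Matrix (Fin q) (Fin r) ℝ) (hL : L.rank = r) (hfac : L * Lᵀ = Mᵀ * M)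
    (Md : Matrix (Fin q) (Fin p) ℝ) (hM : IsMPInv M Md) :
    Md = L * (Lᵀ * L)⁻¹ * (Lᵀ * L)⁻¹ * Lᵀ * Mᵀ := by
  set K := (Lᵀ * L)⁻¹ with hKdef
  have hU : IsUnit (Lᵀ * L) := by
    apply isUnit_of_rank_eq
    rw [Matrix.rank_transpose_mul_self, hL]
  have hUdet : IsUnit (Lᵀ * L).det := (Matrix.isUnit_iff_isUnit_det _).mp hU
  have hK1 : (Lᵀ * L) * K = 1 := Matrix.mul_nonsing_inv _ hUdet
  have hK2 : K * (Lᵀ * L) = 1 := Matrix.nonsing_inv_mul _ hUdet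
  have hKT : Kᵀ = K := by
    rw [hKdef, Matrix.transpose_nonsing_inv, transpose_mul, transpose_transpose]
  have key1 : ∀ {m : ℕ} (X : Matrix (Fin r) (Fin m) ℝ), Lᵀ * (L * (K * X)) = X := by
    intro m X
    simp only [← Matrix.mul_assoc]
    rw [hK1, Matrix.one_mul]
  have key2 : ∀ {m : ℕ} (X : Matrix (Fin r) (Fin m) ℝ), K * (Lᵀ * (L * X)) = X := by
    intro m X
    simp only [← Matrix.mul_assoc]
    rw [Matrix.mul_assoc K Lᵀ L, hK2, Matrix.one_mul]
  -- the projection identity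
  have hproj : M * (L * (K * Lᵀ)) = M := by
    have hN : (M - M * (L * (K * Lᵀ)))ᴴ * (M - M * (L * (K * Lᵀ))) = 0 := by
      have hH : (M - M * (L * (K * Lᵀ)))ᴴ = Mᵀ - L * (K * (Lᵀ * Mᵀ)) := by
        simp [conjTranspose_eq_transpose_of_trivial, transpose_sub, transpose_mul, hKT,
          Matrix.mul_assoc]
      rw [hH]
      rw [Matrix.sub_mul, Matrix.mul_sub, Matrix.mul_sub]
      have t1 : Mᵀ * M = L * Lᵀ := hfac.symm
      have t2 : Mᵀ * (M * (L * (K * Lᵀ))) = L * Lᵀ := by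
        rw [← Matrix.mul_assoc, t1]
        simp only [Matrix.mul_assoc]
        rw [key1]
      have t3 : L * (K * (Lᵀ * Mᵀ)) * M = L * Lᵀ := by
        simp only [Matrix.mul_assoc]
        rw [t1, key2]
      have t4 : L * (K * (Lᵀ * Mᵀ)) * (M * (L * (K * Lᵀ))) = L * Lᵀ := by
        simp only [Matrix.mul_assoc]
        rw [← Matrix.mul_assoc Mᵀ M, t1]
        simp only [Matrix.mul_assoc]
        rw [key1, key2]
      rw [t1, t2, t3, t4]
      abel
    have := Matrix.conjTranspose_mul_self_eq_zero.mp hN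
    rw [sub_eq_zero] at this
    exact this.symm
  -- the candidate
  set B := L * K * K * Lᵀ * Mᵀ with hBdef
  have hBassoc : B = L * (K * (K * (Lᵀ * Mᵀ))) := by
    rw [hBdef, Matrix.mul_assoc, Matrix.mul_assoc, Matrix.mul_assoc]
  have hBM : B * M = L * (K * Lᵀ) := by
    rw [hBassoc]
    simp only [Matrix.mul_assoc]
    rw [← hfac, key2]
  have hmp : IsMPInv M B := by
    refine ⟨?_, ?_, ?_, ?_⟩
    · rw [Matrix.mul_assoc, hBM, hproj]
    · rw [hBM, hBassoc]
      simp only [Matrix.mul_assoc]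
      rw [key2]
    · rw [hBassoc, ← Matrix.mul_assoc]
      simp only [transpose_mul, transpose_transpose, hKT, Matrix.mul_assoc]
    · rw [hBM]
      simp only [transpose_mul, transpose_transpose, hKT, Matrix.mul_assoc]
  exact mp_unique hM hmp
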